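/- arXiv:1908.01215 — 7 statements merged into one kernel-verified Lean document; each statement's English description precedes it below -/
import Mathlib

section
/- Let B be a bicategory and W a class of 1-morphisms satisfying conditions [WB1]–[WB5]. Given 1-morphisms f, g, h : B → C and w : C → D with w ∈ W, and 2-cells α₁ : w ∘ f ⇒ w ∘ g and α₂ : w ∘ g ⇒ w ∘ h, there exists a 1-morphism u : A → B in W together with 2-cells β₁ : f ∘ u ⇒ g ∘ u and β₂ : g ∘ u ⇒ h ∘ u such that w ∘ β₁ = α₁ ∘ u and w ∘ β₂ = α₂ ∘ u; consequently w ∘ (β₂ · β₁) = (α₂ · α₁) ∘ u. -/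
open CategoryTheory Bicategory

universe w v u

/-- A class of 1-morphisms in a bicategory. -/
def WClass (B : Type u) [Bicategory.{w, v} B] :=
  ∀ ⦃a b : B⦄, (a ⟶ b) → Prop

namespace WClass

variable {B : Type u} [Bicategory.{w, v} B]

/-- [WB1]: all identities are in `W`. -/
def WB1 (W : WClass B) : Prop := ∀ a : B, W (𝟙 a)

/-- [WB2]: for composable arrows of `W` there is a pre-composition landing in `W`. -/
def WB2 (W : WClass B) : Prop :=
  ∀ ⦃a b c : B⦄ (vm : a ⟶ b) (wm : b ⟶ c), W vm → W wm →
    ∃ (a' : B) (u : a' ⟶ a), W (u ≫ vm ≫ wm)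

/-- [WB3]: squares with invertible fillers over cospans with one leg in `W`. -/
def WB3 (W : WClass B) : Prop :=
  ∀ ⦃a b c : B⦄ (wm : a ⟶ b) (f : c ⟶ b), W wm →
    ∃ (d : B) (h : d ⟶ a) (vm : d ⟶ c), W vm ∧ Nonempty (h ≫ wm ≅ vm ≫ f)

/-- `β` is a lifting of the 2-cell `η : f ≫ wm ⟶ g ≫ wm` along `wm`, via `u`. -/
def IsLift ⦃a b c : B⦄ (f g : a ⟶ b) (wm : b ⟶ c) (η : f ≫ wm ⟶ g ≫ wm)
    ⦃a' : B⦄ (u : a' ⟶ a) (β : u ≫ f ⟶ u ≫ g) : Prop :=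
  β ▷ wm = (α_ u f wm).hom ≫ u ◁ η ≫ (α_ u g wm).inv

/-- [WB4]: existence of liftings of 2-cells along arrows of `W`, together with
the compatibility of any two such liftings. -/
def WB4 (W : WClass B) : Prop :=
  (∀ ⦃a b c : B⦄ (f g : a ⟶ b) (wm : b ⟶ c), W wm → ∀ η : f ≫ wm ⟶ g ≫ wm,
    ∃ (a' : B) (u : a' ⟶ a), W u ∧ ∃ β : u ≫ f ⟶ u ≫ g, IsLift f g wm η u β) ∧
  (∀ ⦃a b c : B⦄ (f g : a ⟶ b) (wm : b ⟶ c), W wm → ∀ η : f ≫ wm ⟶ g ≫ wm,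
    ∀ ⦃a₁ : B⦄ (u₁ : a₁ ⟶ a) (β₁ : u₁ ≫ f ⟶ u₁ ≫ g), W u₁ → IsLift f g wm η u₁ β₁ →
      ∀ ⦃a₂ : B⦄ (u₂ : a₂ ⟶ a) (β₂ : u₂ ≫ f ⟶ u₂ ≫ g), W u₂ → IsLift f g wm η u₂ β₂ →
        ∃ (d : B) (s : d ⟶ a₁) (t : d ⟶ a₂), W (s ≫ u₁) ∧ W (t ≫ u₂) ∧
          ∃ ε₀ : s ≫ u₁ ≅ t ≫ u₂,
            ((α_ s u₁ f).hom ≫ s ◁ β₁ ≫ (α_ s u₁ g).inv) ≫ ε₀.hom ▷ g =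
              ε₀.hom ▷ f ≫ (α_ t u₂ f).hom ≫ t ◁ β₂ ≫ (α_ t u₂ g).inv)

/-- [WB5]: `W` is closed under invertible 2-cells. -/
def WB5 (W : WClass B) : Prop :=
  ∀ ⦃a b : B⦄ (vm wm : a ⟶ b), W wm → Nonempty (vm ≅ wm) → W vm

end WClass

/-!
Lift `η₁` and `η₂` separately along `wm` by [WB4], via `u₁` and `u₂`, and pass to a common
refinement `p₁ ≫ u₁ ≅ p₂ ≫ u₂` in `W` (built from [WB3], [WB2] and [WB5]). Liftings survive
precomposition and conjugation by an invertible 2-cell, so both 2-cells lift via `p₁ ≫ u₁`;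
liftings via the same arrow compose, since whiskering is functorial.
-/

namespace WClass

variable {B : Type u} [Bicategory.{w, v} B]

namespace IsLift

variable ⦃a b c : B⦄ {f g h : a ⟶ b} {wm : b ⟶ c} ⦃a' : B⦄ {u : a' ⟶ a}

theorem comp {η₁ : f ≫ wm ⟶ g ≫ wm} {η₂ : g ≫ wm ⟶ h ≫ wm}
    {β₁ : u ≫ f ⟶ u ≫ g} {β₂ : u ≫ g ⟶ u ≫ h}
    (l₁ : IsLift f g wm η₁ u β₁) (l₂ : IsLift g h wm η₂ u β₂) :
    IsLift f h wm (η₁ ≫ η₂) u (β₁ ≫ β₂) := by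
  rw [IsLift, comp_whiskerRight, l₁, l₂]
  simp

theorem whiskerLeft {η : f ≫ wm ⟶ g ≫ wm} {β : u ≫ f ⟶ u ≫ g}
    (l : IsLift f g wm η u β) ⦃a'' : B⦄ (t : a'' ⟶ a') :
    IsLift f g wm η (t ≫ u) ((α_ t u f).hom ≫ t ◁ β ≫ (α_ t u g).inv) := by
  simp only [IsLift] at l ⊢
  simp [l]

theorem conj {η : f ≫ wm ⟶ g ≫ wm} {β : u ≫ f ⟶ u ≫ g}
    (l : IsLift f g wm η u β) {u' : a' ⟶ a} (ψ : u' ≅ u) :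
    IsLift f g wm η u' (ψ.hom ▷ f ≫ β ≫ ψ.inv ▷ g) := by
  simp only [IsLift] at l ⊢
  simp only [comp_whiskerRight, l, Category.assoc]
  -- slide `ψ.hom ▷ f ▷ wm` past `u ◁ η` by the interchange law
  rw [associator_naturality_left_assoc, ← whisker_exchange_assoc,
    associator_inv_naturality_left_assoc]
  simp [← comp_whiskerRight]

end IsLift

theorem exists_common_refinement {W : WClass B} (h2 : W.WB2) (h3 : W.WB3) (h5 : W.WB5)
    ⦃a₁ a₂ b : B⦄ {u₁ : a₁ ⟶ b} {u₂ : a₂ ⟶ b} (hu₁ : W u₁) (hu₂ : W u₂) :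
    ∃ (a : B) (p₁ : a ⟶ a₁) (p₂ : a ⟶ a₂), W (p₁ ≫ u₁) ∧ Nonempty (p₁ ≫ u₁ ≅ p₂ ≫ u₂) := by
  obtain ⟨d, s, v, hv, ⟨φ⟩⟩ := h3 u₁ u₂ hu₁
  obtain ⟨a, t, htvu⟩ := h2 v u₂ hv hu₂
  have ψ : (t ≫ s) ≫ u₁ ≅ (t ≫ v) ≫ u₂ := α_ t s u₁ ≪≫ whiskerLeftIso t φ ≪≫ (α_ t v u₂).symm
  exact ⟨a, t ≫ s, t ≫ v, h5 _ _ htvu ⟨ψ ≪≫ α_ t v u₂⟩, ⟨ψ⟩⟩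

end WClass

theorem statement0_general {B : Type u} [Bicategory.{w, v} B] (W : WClass B)
    (h2 : W.WB2) (h3 : W.WB3) (h4 : W.WB4) (h5 : W.WB5)
    {b c d : B} (f g h : b ⟶ c) (wm : c ⟶ d) (hw : W wm)
    (η₁ : f ≫ wm ⟶ g ≫ wm) (η₂ : g ≫ wm ⟶ h ≫ wm) :
    ∃ (a : B) (u : a ⟶ b), W u ∧
      ∃ (β₁ : u ≫ f ⟶ u ≫ g) (β₂ : u ≫ g ⟶ u ≫ h),
        WClass.IsLift f g wm η₁ u β₁ ∧ WClass.IsLift g h wm η₂ u β₂ ∧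
          WClass.IsLift f h wm (η₁ ≫ η₂) u (β₁ ≫ β₂) := by
  obtain ⟨a₁, u₁, hu₁, β₁, l₁⟩ := h4.1 f g wm hw η₁
  obtain ⟨a₂, u₂, hu₂, β₂, l₂⟩ := h4.1 g h wm hw η₂
  obtain ⟨a, p₁, p₂, hW, ⟨ψ⟩⟩ := WClass.exists_common_refinement h2 h3 h5 hu₁ hu₂
  have l₁' := l₁.whiskerLeft p₁
  have l₂' := (l₂.whiskerLeft p₂).conj ψ
  exact ⟨a, p₁ ≫ u₁, hW, _, _, l₁', l₂', l₁'.comp l₂'⟩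

theorem statement0 {B : Type u} [Bicategory.{w, v} B] (W : WClass B)
    (h1 : W.WB1) (h2 : W.WB2) (h3 : W.WB3) (h4 : W.WB4) (h5 : W.WB5)
    {b c d : B} (f g h : b ⟶ c) (wm : c ⟶ d) (hw : W wm)
    (η₁ : f ≫ wm ⟶ g ≫ wm) (η₂ : g ≫ wm ⟶ h ≫ wm) :
    ∃ (a : B) (u : a ⟶ b), W u ∧
      ∃ (β₁ : u ≫ f ⟶ u ≫ g) (β₂ : u ≫ g ⟶ u ≫ h),
        WClass.IsLift f g wm η₁ u β₁ ∧ WClass.IsLift g h wm η₂ u β₂ ∧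
          WClass.IsLift f h wm (η₁ ≫ η₂) u (β₁ ≫ β₂) :=
  statement0_general W h2 h3 h4 h5 f g h wm hw η₁ η₂
end

section
/- Let B be a bicategory and W a class of 1-morphisms satisfying [WB1]–[WB5]. If w ∈ W and α : w ∘ f ⇒ w ∘ g is an invertible 2-cell, then there exists a 1-morphism u ∈ W and an invertible 2-cell β : f ∘ u ⇒ g ∘ u such that w ∘ β = α ∘ u. -/
open CategoryTheory Bicategory

universe w v u

/-!
The first half of [WB4] lifts `η` and `η⁻¹` along `wm`, and with [WB2], [WB3], [WB5] both
liftings can be taken through one arrow of `W`, but nothing forces them to be mutually inverse.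
Their composite, however, lifts an identity 2-cell, as does the identity through `𝟙 a` ([WB1]);
the second half of [WB4] compares these two liftings and shows that the composite becomes an
identity after restriction along a further arrow. Doing this for both composites in turn yields
an invertible lifting.
-/

/-- The paper's `β ∘ x`: whiskering by `x`, with the associators made explicit. -/
def restrictAlong {B : Type u} [Bicategory.{w, v} B] {a b a' e : B} {f g : a ⟶ b} {u : a' ⟶ a}
    (x : e ⟶ a') (β : u ≫ f ⟶ u ≫ g) : (x ≫ u) ≫ f ⟶ (x ≫ u) ≫ g :=
  (α_ x u f).hom ≫ x ◁ β ≫ (α_ x u g).inv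

section restrictAlong

variable {B : Type u} [Bicategory.{w, v} B] {a b a' e : B} {f g k : a ⟶ b} {u : a' ⟶ a}

@[simp]
lemma restrictAlong_id (x : e ⟶ a') : restrictAlong x (𝟙 (u ≫ f)) = 𝟙 _ := by
  simp [restrictAlong]

lemma restrictAlong_comp (x : e ⟶ a') (β : u ≫ f ⟶ u ≫ g) (γ : u ≫ g ⟶ u ≫ k) :
    restrictAlong x (β ≫ γ) = restrictAlong x β ≫ restrictAlong x γ := by
  simp [restrictAlong]

end restrictAlong

namespace WClass

variable {B : Type u} [Bicategory.{w, v} B] {a b c a' : B} {f g k : a ⟶ b} {wm : b ⟶ c}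

section IsLift

variable {η : f ≫ wm ⟶ g ≫ wm} {u : a' ⟶ a} {β : u ≫ f ⟶ u ≫ g}

lemma isLift_restrictAlong {e : B} (x : e ⟶ a') (h : IsLift f g wm η u β) :
    IsLift f g wm η (x ≫ u) (restrictAlong x β) := by
  unfold IsLift at h ⊢
  simp [restrictAlong, h]

lemma isLift_of_iso {u' : a' ⟶ a} (φ : u' ≅ u) (h : IsLift f g wm η u β) :
    IsLift f g wm η u' (φ.hom ▷ f ≫ β ≫ φ.inv ▷ g) := by
  unfold IsLift at h ⊢
  calc _ = (α_ u' f wm).hom ≫ φ.hom ▷ (f ≫ wm) ≫ u ◁ η ≫ φ.inv ▷ (g ≫ wm) ≫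
        (α_ u' g wm).inv := by simp [h]
    _ = _ := by rw [← whisker_exchange_assoc]; simp

lemma isLift_comp {η' : g ≫ wm ⟶ k ≫ wm} {β' : u ≫ g ⟶ u ≫ k}
    (h : IsLift f g wm η u β) (h' : IsLift g k wm η' u β') :
    IsLift f k wm (η ≫ η') u (β ≫ β') := by
  unfold IsLift at h h' ⊢
  simp [h, h']

end IsLift

variable {W : WClass B}

lemma exists_common_lift (h2 : W.WB2) (h3 : W.WB3) (h4 : W.WB4) (h5 : W.WB5) (hw : W wm)
    {f' g' : a ⟶ b} (η : f ≫ wm ⟶ g ≫ wm) (η' : f' ≫ wm ⟶ g' ≫ wm) :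
    ∃ (a' : B) (q : a' ⟶ a), W q ∧ ∃ (β : q ≫ f ⟶ q ≫ g) (β' : q ≫ f' ⟶ q ≫ g'),
      IsLift f g wm η q β ∧ IsLift f' g' wm η' q β' := by
  obtain ⟨a₁, u, hu, β, hβ⟩ := h4.1 f g wm hw η
  obtain ⟨a₂, u', hu', β', hβ'⟩ := h4.1 f' g' wm hw η'
  obtain ⟨d, x, x', hx', ⟨φ⟩⟩ := h3 u u' hu
  obtain ⟨e, y, hy⟩ := h2 x' u' hx' hu'
  refine ⟨e, y ≫ x ≫ u, h5 _ _ hy ⟨whiskerLeftIso y φ⟩, _, _,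
    isLift_restrictAlong y (isLift_restrictAlong x hβ),
    isLift_restrictAlong y (isLift_of_iso φ (isLift_restrictAlong x' hβ'))⟩

lemma exists_restrictAlong_eq_id (h1 : W.WB1) (h4 : W.WB4) (hw : W wm) {q : a' ⟶ a} (hq : W q)
    {θ : q ≫ f ⟶ q ≫ f} (hθ : IsLift f f wm (𝟙 _) q θ) :
    ∃ (e : B) (t : e ⟶ a'), W (t ≫ q) ∧ restrictAlong t θ = 𝟙 _ := by
  obtain ⟨d, s, t, -, ht, ψ, hψ⟩ :=
    h4.2 f f wm hw (𝟙 _) (𝟙 a) (𝟙 _) (h1 a) (by simp [IsLift]) q θ hq hθ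
  exact ⟨d, t, ht, ((cancel_epi (ψ.hom ▷ f)).mp (by simpa [restrictAlong] using hψ)).symm⟩

lemma exists_restrictAlong_comp_eq_id (h1 : W.WB1) (h4 : W.WB4) (hw : W wm) {q : a' ⟶ a}
    (hq : W q) {η : f ≫ wm ⟶ g ≫ wm} {η' : g ≫ wm ⟶ f ≫ wm} (hηη' : η ≫ η' = 𝟙 _)
    {β : q ≫ f ⟶ q ≫ g} {β' : q ≫ g ⟶ q ≫ f}
    (hβ : IsLift f g wm η q β) (hβ' : IsLift g f wm η' q β') :
    ∃ (e : B) (t : e ⟶ a'), W (t ≫ q) ∧ restrictAlong t β ≫ restrictAlong t β' = 𝟙 _ := by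
  have hθ := isLift_comp hβ hβ'
  rw [hηη'] at hθ
  obtain ⟨e, t, ht, hid⟩ := exists_restrictAlong_eq_id h1 h4 hw hq hθ
  exact ⟨e, t, ht, by rw [← restrictAlong_comp, hid]⟩

end WClass

theorem statement1 {B : Type u} [Bicategory.{w, v} B] (W : WClass B)
    (h1 : W.WB1) (h2 : W.WB2) (h3 : W.WB3) (h4 : W.WB4) (h5 : W.WB5)
    {a b c : B} (f g : a ⟶ b) (wm : b ⟶ c) (hw : W wm)
    (η : f ≫ wm ≅ g ≫ wm) :
    ∃ (a' : B) (u : a' ⟶ a), W u ∧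
      ∃ β : u ≫ f ≅ u ≫ g, WClass.IsLift f g wm η.hom u β.hom := by
  obtain ⟨a₁, q, hq, β, β', hβ, hβ'⟩ := WClass.exists_common_lift h2 h3 h4 h5 hw η.hom η.inv
  obtain ⟨a₂, t, ht, hββ'⟩ :=
    WClass.exists_restrictAlong_comp_eq_id h1 h4 hw hq η.hom_inv_id hβ hβ'
  obtain ⟨a₃, t', ht', hβ'β⟩ := WClass.exists_restrictAlong_comp_eq_id h1 h4 hw ht
    η.inv_hom_id (WClass.isLift_restrictAlong t hβ') (WClass.isLift_restrictAlong t hβ)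
  refine ⟨a₃, t' ≫ t ≫ q, ht', ⟨restrictAlong t' (restrictAlong t β),
    restrictAlong t' (restrictAlong t β'), ?_, hβ'β⟩,
    WClass.isLift_restrictAlong t' (WClass.isLift_restrictAlong t hβ)⟩
  rw [← restrictAlong_comp, hββ', restrictAlong_id]
end

section
/- (Category of fractions with weakened axioms.) Let C be a category and W a class of morphisms satisfying: (1) W contains all identities; (2) for every composable pair v : B → C, w : C → D in W there exists u : A → B with w∘v∘u ∈ W; (3) for every w ∈ W and every f with the same codomain as w, there exist w′ ∈ W and f′ with w∘f′ = f∘w′; (4) for every w ∈ W and parallel f₁, f₂ with w∘f₁ = w∘f₂ there exists w′ ∈ W with f₁∘w′ = f₂∘w′. Then the localization C[W⁻¹] admits a calculus of right fractions: every morphism A → B of C[W⁻¹] can be written as f ∘ (w)⁻¹ for a span A ←w− X −f→ B with w ∈ W, and two spans (w₁, f₁), (w₂, f₂) represent the same morphism iff there exist u₁, u₂ with w₁∘u₁ = w₂∘u₂ ∈ W and f₁∘u₁ = f₂∘u₂. -/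
open CategoryTheory

universe v u

/-!
The multiplicative closure `M` of `W` has the same localization as `W`. Conditions (1) and (2)
show inductively that every `s ∈ M` lands in `W` after precomposition with a suitable morphism;
this turns (3) into the Ore condition for `M`, while (4) propagates along composites, so `M`
admits a calculus of right fractions. Its description of the localized morphisms is the claim,
once the same precomposition trick moves all denominators (and the equalizing span) into `W`.
-/

namespace CategoryTheory.MorphismProperty

variable {C : Type*} [Category* C] {W : MorphismProperty C}

lemma exists_comp_mem_of_multiplicativeClosure [W.ContainsIdentities]
    (hcomp : ∀ ⦃X Y Z : C⦄ (v : X ⟶ Y) (w : Y ⟶ Z), W v → W w →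
      ∃ (A : C) (u : A ⟶ X), W (u ≫ v ≫ w))
    {X Y : C} {s : X ⟶ Y} (hs : W.multiplicativeClosure s) :
    ∃ (A : C) (u : A ⟶ X), W (u ≫ s) := by
  induction hs with
  | of f hf => exact ⟨_, 𝟙 _, by simpa using hf⟩
  | id X => exact ⟨X, 𝟙 X, by simpa using W.id_mem X⟩
  | comp_of f g _ hg ih =>
      obtain ⟨A, u, hu⟩ := ih
      obtain ⟨B, t, ht⟩ := hcomp (u ≫ f) g hu hg
      exact ⟨B, t ≫ u, by simpa using ht⟩

lemma multiplicativeClosure_ext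
    (hext : ∀ ⦃X Y Z : C⦄ (w : X ⟶ Y) (f₁ f₂ : Z ⟶ X), W w → f₁ ≫ w = f₂ ≫ w →
      ∃ (P : C) (w' : P ⟶ Z), W w' ∧ w' ≫ f₁ = w' ≫ f₂)
    {Y Y' : C} {s : Y ⟶ Y'} (hs : W.multiplicativeClosure s) {X : C} (f₁ f₂ : X ⟶ Y)
    (h : f₁ ≫ s = f₂ ≫ s) :
    ∃ (X' : C) (t : X' ⟶ X) (_ : W.multiplicativeClosure t), t ≫ f₁ = t ≫ f₂ := by
  induction hs generalizing X with
  | of g hg =>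
      obtain ⟨P, w', hw', hw'f⟩ := hext g f₁ f₂ hg h
      exact ⟨P, w', .of w' hw', hw'f⟩
  | id Y => exact ⟨X, 𝟙 X, .id X, by simpa using h⟩
  | comp_of a g _ hg ih =>
      obtain ⟨P, w', hw', hw'f⟩ := hext g (f₁ ≫ a) (f₂ ≫ a) hg (by simpa using h)
      obtain ⟨Q, t, ht, htf⟩ := ih (w' ≫ f₁) (w' ≫ f₂) (by simpa using hw'f)
      exact ⟨Q, t ≫ w', W.multiplicativeClosure.comp_mem _ _ ht (.of w' hw'),
        by simpa using htf⟩

lemma hasRightCalculusOfFractions_multiplicativeClosure [W.ContainsIdentities]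
    (hcomp : ∀ ⦃X Y Z : C⦄ (v : X ⟶ Y) (w : Y ⟶ Z), W v → W w →
      ∃ (A : C) (u : A ⟶ X), W (u ≫ v ≫ w))
    (hore : ∀ ⦃X Y Z : C⦄ (w : X ⟶ Y) (f : Z ⟶ Y), W w →
      ∃ (P : C) (w' : P ⟶ Z) (f' : P ⟶ X), W w' ∧ f' ≫ w = w' ≫ f)
    (hext : ∀ ⦃X Y Z : C⦄ (w : X ⟶ Y) (f₁ f₂ : Z ⟶ X), W w → f₁ ≫ w = f₂ ≫ w →
      ∃ (P : C) (w' : P ⟶ Z), W w' ∧ w' ≫ f₁ = w' ≫ f₂) :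
    W.multiplicativeClosure.HasRightCalculusOfFractions where
  exists_rightFraction X Y φ := by
    obtain ⟨A, u, hu⟩ := exists_comp_mem_of_multiplicativeClosure hcomp φ.hs
    obtain ⟨P, w', f', hw', fac⟩ := hore (u ≫ φ.s) φ.f hu
    exact ⟨RightFraction.mk w' (.of w' hw') (f' ≫ u), by simpa using fac.symm⟩
  ext X Y Y' f₁ f₂ s hs h := multiplicativeClosure_ext hext hs f₁ f₂ h

lemma IsInvertedBy.multiplicativeClosure {D : Type*} [Category* D] {F : C ⥤ D}
    (hF : W.IsInvertedBy F) : W.multiplicativeClosure.IsInvertedBy F :=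
  (W.multiplicativeClosure_le_iff ((isomorphisms D).inverseImage F)).2 hF

lemma rightFractionRel_multiplicativeClosure_iff [W.ContainsIdentities]
    (hcomp : ∀ ⦃X Y Z : C⦄ (v : X ⟶ Y) (w : Y ⟶ Z), W v → W w →
      ∃ (A : C) (u : A ⟶ X), W (u ≫ v ≫ w))
    {X Y : C} (φ ψ : W.multiplicativeClosure.RightFraction X Y) :
    RightFractionRel φ ψ ↔ ∃ (Z : C) (t₁ : Z ⟶ φ.X') (t₂ : Z ⟶ ψ.X'),
      t₁ ≫ φ.s = t₂ ≫ ψ.s ∧ W (t₁ ≫ φ.s) ∧ t₁ ≫ φ.f = t₂ ≫ ψ.f := by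
  constructor
  · rintro ⟨Z, t₁, t₂, hs, hf, ht⟩
    obtain ⟨A, u, hu⟩ := exists_comp_mem_of_multiplicativeClosure hcomp ht
    exact ⟨A, u ≫ t₁, u ≫ t₂, by simp [hs], by simpa using hu, by simp [hf]⟩
  · rintro ⟨Z, t₁, t₂, hs, ht, hf⟩
    exact ⟨Z, t₁, t₂, hs, hf, .of _ ht⟩

end CategoryTheory.MorphismProperty

namespace CategoryTheory.Localization

open MorphismProperty

variable {C D : Type*} [Category* C] [Category* D] (L : C ⥤ D) (W : MorphismProperty C)
  [L.IsLocalization W]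

lemma isLocalization_multiplicativeClosure : L.IsLocalization W.multiplicativeClosure :=
  Functor.IsLocalization.of_equivalence_source L W L _ Equivalence.refl
    (fun _ _ f hf ↦ le_isoClosure _ _ (.of f hf))
    (inverts L W).multiplicativeClosure L.leftUnitor

lemma rightFraction_map_mk_eq_isoOfHom_inv_comp {W' : MorphismProperty C}
    (hL : W'.IsInvertedBy L) {X Y X' : C} (s : X' ⟶ X) (hs : W s) (hs' : W' s) (f : X' ⟶ Y) :
    (RightFraction.mk s hs' f).map L hL = (isoOfHom L W s hs).inv ≫ L.map f := by
  rw [← cancel_epi (isoOfHom L W s hs).hom, isoOfHom_hom, isoOfHom_hom_inv_id_assoc]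
  exact (RightFraction.mk s hs' f).map_s_comp_map L hL

end CategoryTheory.Localization

open MorphismProperty

theorem statement8 {C : Type u} [Category.{v} C] (W : MorphismProperty C)
    (h1 : ∀ X : C, W (𝟙 X))
    (h2 : ∀ ⦃X Y Z : C⦄ (vm : X ⟶ Y) (wm : Y ⟶ Z), W vm → W wm →
      ∃ (A : C) (u : A ⟶ X), W (u ≫ vm ≫ wm))
    (h3 : ∀ ⦃X Y Z : C⦄ (wm : X ⟶ Y) (f : Z ⟶ Y), W wm →
      ∃ (P : C) (w' : P ⟶ Z) (f' : P ⟶ X), W w' ∧ f' ≫ wm = w' ≫ f)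
    (h4 : ∀ ⦃X Y Z : C⦄ (wm : X ⟶ Y) (f₁ f₂ : Z ⟶ X), W wm → f₁ ≫ wm = f₂ ≫ wm →
      ∃ (P : C) (w' : P ⟶ Z), W w' ∧ w' ≫ f₁ = w' ≫ f₂) :
    (∀ (A B : C) (φ : W.Q.obj A ⟶ W.Q.obj B),
      ∃ (X : C) (wm : X ⟶ A) (f : X ⟶ B) (hw : W wm),
        φ = (Localization.isoOfHom W.Q W wm hw).inv ≫ W.Q.map f) ∧
    (∀ (A B X₁ X₂ : C) (w₁ : X₁ ⟶ A) (f₁ : X₁ ⟶ B) (w₂ : X₂ ⟶ A) (f₂ : X₂ ⟶ B)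
        (hw₁ : W w₁) (hw₂ : W w₂),
      (Localization.isoOfHom W.Q W w₁ hw₁).inv ≫ W.Q.map f₁ =
          (Localization.isoOfHom W.Q W w₂ hw₂).inv ≫ W.Q.map f₂ ↔
        ∃ (Y : C) (u₁ : Y ⟶ X₁) (u₂ : Y ⟶ X₂),
          u₁ ≫ w₁ = u₂ ≫ w₂ ∧ W (u₁ ≫ w₁) ∧ u₁ ≫ f₁ = u₂ ≫ f₂) := by
  have : W.ContainsIdentities := ⟨h1⟩
  have := Localization.isLocalization_multiplicativeClosure W.Q W
  have := hasRightCalculusOfFractions_multiplicativeClosure h2 h3 h4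
  have hQ := Localization.inverts W.Q W.multiplicativeClosure
  refine ⟨fun A B φ ↦ ?_, fun A B X₁ X₂ w₁ f₁ w₂ f₂ hw₁ hw₂ ↦ ?_⟩
  · obtain ⟨ψ, rfl⟩ := Localization.exists_rightFraction W.Q W.multiplicativeClosure φ
    obtain ⟨X, u, hu⟩ := exists_comp_mem_of_multiplicativeClosure h2 ψ.hs
    refine ⟨X, u ≫ ψ.s, u ≫ ψ.f, hu, ?_⟩
    rw [← Localization.rightFraction_map_mk_eq_isoOfHom_inv_comp W.Q W hQ _ hu (.of _ hu),
      RightFraction.map_eq_iff]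
    exact ⟨X, u, 𝟙 X, by simp, by simp, by simpa using .of _ hu⟩
  · rw [← Localization.rightFraction_map_mk_eq_isoOfHom_inv_comp W.Q W hQ _ hw₁ (.of _ hw₁),
      ← Localization.rightFraction_map_mk_eq_isoOfHom_inv_comp W.Q W hQ _ hw₂ (.of _ hw₂),
      RightFraction.map_eq_iff, rightFractionRel_multiplicativeClosure_iff h2]
end

section
/- In a category C with a class W of morphisms satisfying the weakened right-fractions conditions, the composition of spans works as follows: given composable spans A ←u₁− S −f₁→ B and B ←u₂− T −f₂→ C with u₁, u₂ ∈ W, there exist, by conditions (2) and (3), morphisms ū₂ and f̄₁ with u₂∘f̄₁ = f₁∘ū₂ and u₁∘ū₂ ∈ W, and the composite span A ←u₁∘ū₂− · −f₂∘f̄₁→ C represents the composite morphism in C[W⁻¹]; moreover any other choice of such a square yields a span representing the same morphism of C[W⁻¹]. -/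
open CategoryTheory

universe v u

theorem statement9 {C : Type u} [Category.{v} C] (W : MorphismProperty C)
    (h1 : ∀ X : C, W (𝟙 X))
    (h2 : ∀ ⦃X Y Z : C⦄ (vm : X ⟶ Y) (wm : Y ⟶ Z), W vm → W wm →
      ∃ (A : C) (u : A ⟶ X), W (u ≫ vm ≫ wm))
    (h3 : ∀ ⦃X Y Z : C⦄ (wm : X ⟶ Y) (f : Z ⟶ Y), W wm →
      ∃ (P : C) (w' : P ⟶ Z) (f' : P ⟶ X), W w' ∧ f' ≫ wm = w' ≫ f)
    (h4 : ∀ ⦃X Y Z : C⦄ (wm : X ⟶ Y) (f₁ f₂ : Z ⟶ X), W wm → f₁ ≫ wm = f₂ ≫ wm →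
      ∃ (P : C) (w' : P ⟶ Z), W w' ∧ w' ≫ f₁ = w' ≫ f₂)
    {A B' C' S T : C} (u₁ : S ⟶ A) (f₁ : S ⟶ B') (u₂ : T ⟶ B') (f₂ : T ⟶ C')
    (hu₁ : W u₁) (hu₂ : W u₂) :
    (∃ (P : C) (ub : P ⟶ S) (fb : P ⟶ T), fb ≫ u₂ = ub ≫ f₁ ∧ W (ub ≫ u₁)) ∧
    (∀ (P : C) (ub : P ⟶ S) (fb : P ⟶ T),
      fb ≫ u₂ = ub ≫ f₁ → ∀ (hW : W (ub ≫ u₁)),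
        (Localization.isoOfHom W.Q W (ub ≫ u₁) hW).inv ≫ W.Q.map (fb ≫ f₂) =
          ((Localization.isoOfHom W.Q W u₁ hu₁).inv ≫ W.Q.map f₁) ≫
            ((Localization.isoOfHom W.Q W u₂ hu₂).inv ≫ W.Q.map f₂)) := by
  constructor
  · obtain ⟨P, w', f', hw', hsq⟩ := h3 u₂ f₁ hu₂
    obtain ⟨Q, u, hu⟩ := h2 w' u₁ hw' hu₁
    exact ⟨Q, u ≫ w', u ≫ f',
      by rw [Category.assoc, hsq, Category.assoc], by rwa [Category.assoc]⟩
  · intro P ub fb hsq hW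
    have e1 : W.Q.map fb =
        W.Q.map ub ≫ W.Q.map f₁ ≫ (Localization.isoOfHom W.Q W u₂ hu₂).inv := by
      rw [← Category.assoc, Iso.eq_comp_inv, Localization.isoOfHom_hom,
        ← Functor.map_comp, ← Functor.map_comp, hsq]
    have e2 : (Localization.isoOfHom W.Q W (ub ≫ u₁) hW).inv ≫ W.Q.map ub =
        (Localization.isoOfHom W.Q W u₁ hu₁).inv := by
      rw [Iso.inv_comp_eq, Iso.eq_comp_inv, Localization.isoOfHom_hom,
        Localization.isoOfHom_hom, ← Functor.map_comp]
    simp only [Functor.map_comp, e1, Category.assoc, reassoc_of% e2]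
end

section
/- Let C be a category with classes W ⊆ V of morphisms, where V satisfies the weakened right-fractions conditions (identities; weak composition closure; squares; cancellation as in the weakened Gabriel–Zisman axioms), and W is weakly initial in V (for all v ∈ V there is u with v∘u ∈ W), contains identities, and is such that any morphism equal to a member of W is in W. Then the canonical functor C[W⁻¹] → C[V⁻¹] induced by the inclusion W ⊆ V is an equivalence of categories. -/
open CategoryTheory

universe v u

/-! A functor inverting `W` inverts `V`: given `v ∈ V`, weak initiality gives `u` with
`u ≫ v ∈ W`, and the fraction axioms give `g` with `g ≫ u ∈ W`, so the image of `u` has a left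
and a right inverse; being an isomorphism, it makes the image of `v` one too. Thus `W.Q` and
`V.Q` satisfy the same universal property, and the comparison functor is an equivalence. -/

namespace CategoryTheory

lemma isIso_of_isIso_comp_of_isIso_comp {C : Type*} [Category C] {X Y Z T : C}
    (f : X ⟶ Y) (g : Y ⟶ Z) (h : Z ⟶ T) [IsIso (f ≫ g)] [IsIso (g ≫ h)] : IsIso g := by
  have : IsSplitMono g :=
    IsSplitMono.mk' ⟨h ≫ inv (g ≫ h), by rw [← Category.assoc, IsIso.hom_inv_id]⟩
  have : Epi g := epi_of_epi f g
  exact isIso_of_epi_of_isSplitMono g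

namespace MorphismProperty

variable {C : Type u} [Category.{v} C] {V W : MorphismProperty C}

/- The square and cancellation axioms identify `u` with a `V`-morphism after precomposing,
and weak initiality pushes that composite into `W`. -/
lemma exists_comp_mem_of_comp_mem
    (hV2 : ∀ ⦃X Y Z : C⦄ (vm : X ⟶ Y) (wm : Y ⟶ Z), V vm → V wm →
      ∃ (A : C) (u : A ⟶ X), V (u ≫ vm ≫ wm))
    (hV3 : ∀ ⦃X Y Z : C⦄ (wm : X ⟶ Y) (f : Z ⟶ Y), V wm →
      ∃ (P : C) (w' : P ⟶ Z) (f' : P ⟶ X), V w' ∧ f' ≫ wm = w' ≫ f)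
    (hV4 : ∀ ⦃X Y Z : C⦄ (wm : X ⟶ Y) (f₁ f₂ : Z ⟶ X), V wm → f₁ ≫ wm = f₂ ≫ wm →
      ∃ (P : C) (w' : P ⟶ Z), V w' ∧ w' ≫ f₁ = w' ≫ f₂)
    (hWV : W ≤ V)
    (hwi : ∀ ⦃X Y : C⦄ (f : X ⟶ Y), V f → ∃ (Z : C) (u : Z ⟶ X), W (u ≫ f))
    {X Y Z : C} {u : Z ⟶ X} {v : X ⟶ Y} (hv : V v) (huv : W (u ≫ v)) :
    ∃ (B : C) (g : B ⟶ Z), W (g ≫ u) := by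
  obtain ⟨P, w, f, hw, hsq⟩ := hV3 (u ≫ v) v (hWV _ huv)
  obtain ⟨P', w', hw', hcancel⟩ := hV4 v w (f ≫ u) hv (by rw [← hsq, Category.assoc])
  obtain ⟨A, a, ha⟩ := hV2 w' w hw' hw
  obtain ⟨B, b, hb⟩ := hwi _ ha
  refine ⟨B, b ≫ a ≫ w' ≫ f, ?_⟩
  simpa only [Category.assoc, ← hcancel] using hb

lemma isInvertedBy_of_weaklyInitial {D : Type*} [Category D] (F : C ⥤ D)
    (hF : W.IsInvertedBy F)
    (hV2 : ∀ ⦃X Y Z : C⦄ (vm : X ⟶ Y) (wm : Y ⟶ Z), V vm → V wm →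
      ∃ (A : C) (u : A ⟶ X), V (u ≫ vm ≫ wm))
    (hV3 : ∀ ⦃X Y Z : C⦄ (wm : X ⟶ Y) (f : Z ⟶ Y), V wm →
      ∃ (P : C) (w' : P ⟶ Z) (f' : P ⟶ X), V w' ∧ f' ≫ wm = w' ≫ f)
    (hV4 : ∀ ⦃X Y Z : C⦄ (wm : X ⟶ Y) (f₁ f₂ : Z ⟶ X), V wm → f₁ ≫ wm = f₂ ≫ wm →
      ∃ (P : C) (w' : P ⟶ Z), V w' ∧ w' ≫ f₁ = w' ≫ f₂)
    (hWV : W ≤ V)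
    (hwi : ∀ ⦃X Y : C⦄ (f : X ⟶ Y), V f → ∃ (Z : C) (u : Z ⟶ X), W (u ≫ f)) :
    V.IsInvertedBy F := by
  intro X Y v hv
  obtain ⟨Z, u, huv⟩ := hwi v hv
  obtain ⟨B, g, hgu⟩ := exists_comp_mem_of_comp_mem hV2 hV3 hV4 hWV hwi hv huv
  have : IsIso (F.map g ≫ F.map u) := by rw [← F.map_comp]; exact hF _ hgu
  have : IsIso (F.map u ≫ F.map v) := by rw [← F.map_comp]; exact hF _ huv
  have : IsIso (F.map u) := isIso_of_isIso_comp_of_isIso_comp (F.map g) (F.map u) (F.map v)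
  exact IsIso.of_isIso_comp_left (F.map u) (F.map v)

lemma isEquivalence_lift_Q_of_le (hWV : W ≤ V) (hV : V.IsInvertedBy W.Q) :
    (Localization.lift V.Q
      (fun _ _ f hf => Localization.inverts V.Q V f (hWV f hf)) W.Q).IsEquivalence := by
  have := Localization.liftingLift V.Q
    (fun _ _ f hf => Localization.inverts V.Q V f (hWV f hf)) W.Q
  exact Localization.isEquivalence W.Q W V.Q V V.Q _ W.Q (Localization.lift W.Q hV V.Q)
    (Localization.fac W.Q hV V.Q) (Localization.fac V.Q _ W.Q)

end MorphismProperty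

end CategoryTheory

theorem statement10_general {C : Type u} [Category.{v} C] (V W : MorphismProperty C)
    (hV2 : ∀ ⦃X Y Z : C⦄ (vm : X ⟶ Y) (wm : Y ⟶ Z), V vm → V wm →
      ∃ (A : C) (u : A ⟶ X), V (u ≫ vm ≫ wm))
    (hV3 : ∀ ⦃X Y Z : C⦄ (wm : X ⟶ Y) (f : Z ⟶ Y), V wm →
      ∃ (P : C) (w' : P ⟶ Z) (f' : P ⟶ X), V w' ∧ f' ≫ wm = w' ≫ f)
    (hV4 : ∀ ⦃X Y Z : C⦄ (wm : X ⟶ Y) (f₁ f₂ : Z ⟶ X), V wm → f₁ ≫ wm = f₂ ≫ wm →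
      ∃ (P : C) (w' : P ⟶ Z), V w' ∧ w' ≫ f₁ = w' ≫ f₂)
    (hsub : ∀ ⦃X Y : C⦄ (f : X ⟶ Y), W f → V f)
    (hwi : ∀ ⦃X Y : C⦄ (f : X ⟶ Y), V f → ∃ (Z : C) (u : Z ⟶ X), W (u ≫ f)) :
    (Localization.lift V.Q
      (fun _ _ f hf => Localization.inverts V.Q V f (hsub f hf)) W.Q).IsEquivalence :=
  MorphismProperty.isEquivalence_lift_Q_of_le hsub
    (MorphismProperty.isInvertedBy_of_weaklyInitial W.Q (Localization.inverts W.Q W)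
      hV2 hV3 hV4 hsub hwi)

theorem statement10 {C : Type u} [Category.{v} C] (V W : MorphismProperty C)
    (hV1 : ∀ X : C, V (𝟙 X))
    (hV2 : ∀ ⦃X Y Z : C⦄ (vm : X ⟶ Y) (wm : Y ⟶ Z), V vm → V wm →
      ∃ (A : C) (u : A ⟶ X), V (u ≫ vm ≫ wm))
    (hV3 : ∀ ⦃X Y Z : C⦄ (wm : X ⟶ Y) (f : Z ⟶ Y), V wm →
      ∃ (P : C) (w' : P ⟶ Z) (f' : P ⟶ X), V w' ∧ f' ≫ wm = w' ≫ f)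
    (hV4 : ∀ ⦃X Y Z : C⦄ (wm : X ⟶ Y) (f₁ f₂ : Z ⟶ X), V wm → f₁ ≫ wm = f₂ ≫ wm →
      ∃ (P : C) (w' : P ⟶ Z), V w' ∧ w' ≫ f₁ = w' ≫ f₂)
    (hsub : ∀ ⦃X Y : C⦄ (f : X ⟶ Y), W f → V f)
    (hwi : ∀ ⦃X Y : C⦄ (f : X ⟶ Y), V f → ∃ (Z : C) (u : Z ⟶ X), W (u ≫ f))
    (hW1 : ∀ X : C, W (𝟙 X)) :
    (Localization.lift V.Q
      (fun _ _ f hf => Localization.inverts V.Q V f (hsub f hf)) W.Q).IsEquivalence :=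
  statement10_general V W hV2 hV3 hV4 hsub hwi
end

section
/- Let B be a bicategory and W a class of arrows satisfying [WB1]–[WB5] whose arrows are all co-fully-faithful. Then the universal homomorphism J_W : B → B(W⁻¹) is 2-full and 2-faithful: for 1-morphisms f, g : A → B of B, the map from 2-cells f ⇒ g in B to 2-cells J_W(f) ⇒ J_W(g) in B(W⁻¹) is a bijection. -/
open CategoryTheory Bicategory

universe w v u

/-- A 1-morphism `wm` is co-fully-faithful if every 2-cell `wm ≫ f ⟶ wm ≫ g`
factors uniquely through right whiskering by `wm`. -/
def CoFF {B : Type u} [Bicategory.{w, v} B] ⦃a b : B⦄ (wm : a ⟶ b) : Prop :=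
  ∀ ⦃c : B⦄ (f g : b ⟶ c) (η : wm ≫ f ⟶ wm ≫ g), ∃! η' : f ⟶ g, wm ◁ η' = η

/-- A 1-morphism `wm` is co-full if every 2-cell `wm ≫ f ⟶ wm ≫ g`
factors (not necessarily uniquely) through right whiskering by `wm`. -/
def CoFull {B : Type u} [Bicategory.{w, v} B] ⦃a b : B⦄ (wm : a ⟶ b) : Prop :=
  ∀ ⦃c : B⦄ (f g : b ⟶ c) (η : wm ≫ f ⟶ wm ≫ g), ∃ η' : f ⟶ g, wm ◁ η' = η

/-- Equivalence of 2-cell diagrams between the spans `(u₁, f₁)` and `(u₂, f₂)` in the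
construction of the bicategory of fractions: the diagram `(v₁, v₂, αc, β)` is equivalent
to the diagram `(v₁', v₂', αc', β')` when there is a common refinement `s, t` with
invertible comparison 2-cells `ε₁, ε₂`, the relevant composite in `W`, satisfying the
two pasting equations. -/
def DiagEquiv {B : Type u} [Bicategory.{w, v} B] (W : WClass B)
    {a b c₁ c₂ : B} (u₁ : c₁ ⟶ a) (f₁ : c₁ ⟶ b) (u₂ : c₂ ⟶ a) (f₂ : c₂ ⟶ b)
    {d : B} (v₁ : d ⟶ c₁) (v₂ : d ⟶ c₂)
    (αc : v₁ ≫ u₁ ≅ v₂ ≫ u₂) (β : v₁ ≫ f₁ ⟶ v₂ ≫ f₂)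
    {d' : B} (v₁' : d' ⟶ c₁) (v₂' : d' ⟶ c₂)
    (αc' : v₁' ≫ u₁ ≅ v₂' ≫ u₂) (β' : v₁' ≫ f₁ ⟶ v₂' ≫ f₂) : Prop :=
  ∃ (e : B) (s : e ⟶ d) (t : e ⟶ d'),
    W ((s ≫ v₁) ≫ u₁) ∧
    ∃ (ε₁ : s ≫ v₁ ≅ t ≫ v₁') (ε₂ : s ≫ v₂ ≅ t ≫ v₂'),
      (ε₁.hom ▷ u₁ ≫ (α_ t v₁' u₁).hom ≫ t ◁ αc'.hom ≫ (α_ t v₂' u₂).inv =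
        (α_ s v₁ u₁).hom ≫ s ◁ αc.hom ≫ (α_ s v₂ u₂).inv ≫ ε₂.hom ▷ u₂) ∧
      (ε₁.hom ▷ f₁ ≫ (α_ t v₁' f₁).hom ≫ t ◁ β' ≫ (α_ t v₂' f₂).inv =
        (α_ s v₁ f₁).hom ≫ s ◁ β ≫ (α_ s v₂ f₂).inv ≫ ε₂.hom ▷ f₂)

/-!
A 2-cell `(v₁, v₂, αc, β) : J f ⟹ J g` of `B(W⁻¹)` has `v₁ ∈ W`. Transporting `β` along `αc`
gives a 2-cell `v₁ ≫ f ⟶ v₁ ≫ g`, which by co-fullness of `v₁` is `v₁ ◁ γ`; the refinement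
`(𝟙, v₁)` then exhibits the diagram as equivalent to `J γ`. Conversely, an equivalence between
`J γ` and `J δ` forces its two comparison cells to agree, and the interchange law turns the
remaining pasting equation into `t ◁ γ = t ◁ δ` for some `t ∈ W`; co-faithfulness of `t` gives
`γ = δ`.
-/

namespace WClass

variable {B : Type u} [Bicategory.{w, v} B] {W : WClass B}

theorem WB5.mem_of_iso (h5 : W.WB5) {a b : B} {vm wm : a ⟶ b} (hw : W wm) (e : vm ≅ wm) :
    W vm :=
  h5 vm wm hw ⟨e⟩

theorem WB5.mem_of_comp_id (h5 : W.WB5) {a b : B} {vm : a ⟶ b} (hv : W (vm ≫ 𝟙 b)) : W vm :=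
  h5.mem_of_iso hv (ρ_ vm).symm

end WClass

section

variable {B : Type u} [Bicategory.{w, v} B]

theorem CoFF.coFull {a b : B} {wm : a ⟶ b} (hw : CoFF wm) : CoFull wm :=
  fun _ f g η => (hw f g η).exists

theorem CoFF.whiskerLeft_injective {a b c : B} {wm : a ⟶ b} (hw : CoFF wm) {f g : b ⟶ c} :
    Function.Injective (fun η : f ⟶ g => wm ◁ η) := by
  intro γ δ h
  obtain ⟨_, -, huniq⟩ := hw f g (wm ◁ γ)
  exact (huniq γ rfl).trans (huniq δ h.symm).symm

theorem exists_diagEquiv_whiskerLeft_of_coFull {W : WClass B} (h5 : W.WB5) {a b d : B}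
    {f g : a ⟶ b} (v₁ v₂ : d ⟶ a) (αc : v₁ ≫ 𝟙 a ≅ v₂ ≫ 𝟙 a) (hWv : W (v₁ ≫ 𝟙 a))
    (hfull : CoFull v₁) (β : v₁ ≫ f ⟶ v₂ ≫ g) :
    ∃ γ : f ⟶ g, DiagEquiv W (𝟙 a) f (𝟙 a) g v₁ v₂ αc β
      (𝟙 a) (𝟙 a) (Iso.refl (𝟙 a ≫ 𝟙 a)) (𝟙 a ◁ γ) := by
  obtain ⟨γ, hγ⟩ := hfull f g (β ≫ ((ρ_ v₂).inv ≫ αc.inv ≫ (ρ_ v₁).hom) ▷ g)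
  obtain rfl : β = v₁ ◁ γ ≫ ((ρ_ v₁).inv ≫ αc.hom ≫ (ρ_ v₂).hom) ▷ g := by
    rw [hγ]; simp
  refine ⟨γ, d, 𝟙 d, v₁, h5.mem_of_iso hWv (whiskerRightIso (λ_ v₁) (𝟙 a)),
    (λ_ v₁) ≪≫ (ρ_ v₁).symm, (λ_ v₂) ≪≫ (ρ_ v₂).symm ≪≫ αc.symm, ?_, ?_⟩
  · simp only [Iso.trans_hom, Iso.symm_hom, Bicategory.whiskerRight_id, Iso.refl_hom,
      whiskerLeft_id, id_whiskerLeft, Category.assoc]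
    have hcoh : (λ_ (v₂ ≫ 𝟙 a)).inv ≫ (α_ (𝟙 d) v₂ (𝟙 a)).inv ≫ (ρ_ (𝟙 d ≫ v₂)).hom ≫
        (λ_ v₂).hom ≫ (ρ_ v₂).inv = 𝟙 _ := by
      bicategory_coherence
    rw [reassoc_of% hcoh, Category.id_comp, Iso.hom_inv_id_assoc]
    bicategory_coherence
  · simp

theorem exists_whiskerLeft_eq_of_diagEquiv {W : WClass B} (h5 : W.WB5) {a b : B}
    {f g : a ⟶ b} {γ δ : f ⟶ g}
    (h : DiagEquiv W (𝟙 a) f (𝟙 a) g (𝟙 a) (𝟙 a) (Iso.refl (𝟙 a ≫ 𝟙 a)) (𝟙 a ◁ γ)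
      (𝟙 a) (𝟙 a) (Iso.refl (𝟙 a ≫ 𝟙 a)) (𝟙 a ◁ δ)) :
    ∃ (e : B) (t : e ⟶ a), W t ∧ t ◁ γ = t ◁ δ := by
  obtain ⟨e, s, t, hW, ε₁, ε₂, hunit, hcell⟩ := h
  have hε : ε₁.hom = ε₂.hom := by
    simpa [Bicategory.whiskerRight_id] using hunit
  rw [← hε] at hcell
  have hδ : ε₁.hom ▷ f ≫ (ρ_ t).hom ▷ f ≫ t ◁ δ ≫ (ρ_ t).inv ▷ g
      = (ρ_ s).hom ▷ f ≫ s ◁ γ ≫ (ρ_ s).inv ▷ g ≫ ε₁.hom ▷ g := by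
    simpa using hcell
  have hγ : (ρ_ s).hom ▷ f ≫ s ◁ γ ≫ (ρ_ s).inv ▷ g ≫ ε₁.hom ▷ g
      = ε₁.hom ▷ f ≫ (ρ_ t).hom ▷ f ≫ t ◁ γ ≫ (ρ_ t).inv ▷ g := by
    simpa using whisker_exchange ε₁.hom γ
  have hWt : W t :=
    h5.mem_of_comp_id (h5.mem_of_iso (h5.mem_of_comp_id hW) ε₁.symm)
  have key := hδ.trans hγ
  rw [cancel_epi, cancel_epi, cancel_mono] at key
  exact ⟨e, t, hWt, key.symm⟩

end

theorem statement16_general {B : Type u} [Bicategory.{w, v} B] (W : WClass B)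
    (h5 : W.WB5)
    (hcoff : ∀ ⦃x y : B⦄ (f : x ⟶ y), W f → CoFF f)
    {a b : B} (f g : a ⟶ b) :
    (∀ {d : B} (v₁ : d ⟶ a) (v₂ : d ⟶ a)
        (αc : v₁ ≫ 𝟙 a ≅ v₂ ≫ 𝟙 a), W (v₁ ≫ 𝟙 a) →
        ∀ β : v₁ ≫ f ⟶ v₂ ≫ g,
          ∃ γ : f ⟶ g,
            DiagEquiv W (𝟙 a) f (𝟙 a) g v₁ v₂ αc β
              (𝟙 a) (𝟙 a) (Iso.refl (𝟙 a ≫ 𝟙 a)) (𝟙 a ◁ γ)) ∧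
    (∀ γ δ : f ⟶ g,
      DiagEquiv W (𝟙 a) f (𝟙 a) g (𝟙 a) (𝟙 a) (Iso.refl (𝟙 a ≫ 𝟙 a)) (𝟙 a ◁ γ)
        (𝟙 a) (𝟙 a) (Iso.refl (𝟙 a ≫ 𝟙 a)) (𝟙 a ◁ δ) → γ = δ) := by
  refine ⟨fun v₁ v₂ αc hWv β => ?_, fun γ δ h => ?_⟩
  · exact exists_diagEquiv_whiskerLeft_of_coFull h5 v₁ v₂ αc hWv
      (hcoff v₁ (h5.mem_of_comp_id hWv)).coFull β
  · obtain ⟨_, t, hWt, hγδ⟩ := exists_whiskerLeft_eq_of_diagEquiv h5 h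
    exact (hcoff t hWt).whiskerLeft_injective hγδ

theorem statement16 {B : Type u} [Bicategory.{w, v} B] (W : WClass B)
    (h1 : W.WB1) (h2 : W.WB2) (h3 : W.WB3) (h4 : W.WB4) (h5 : W.WB5)
    (hcoff : ∀ ⦃x y : B⦄ (f : x ⟶ y), W f → CoFF f)
    {a b : B} (f g : a ⟶ b) :
    (∀ {d : B} (v₁ : d ⟶ a) (v₂ : d ⟶ a)
        (αc : v₁ ≫ 𝟙 a ≅ v₂ ≫ 𝟙 a), W (v₁ ≫ 𝟙 a) →
        ∀ β : v₁ ≫ f ⟶ v₂ ≫ g,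
          ∃ γ : f ⟶ g,
            DiagEquiv W (𝟙 a) f (𝟙 a) g v₁ v₂ αc β
              (𝟙 a) (𝟙 a) (Iso.refl (𝟙 a ≫ 𝟙 a)) (𝟙 a ◁ γ)) ∧
    (∀ γ δ : f ⟶ g,
      DiagEquiv W (𝟙 a) f (𝟙 a) g (𝟙 a) (𝟙 a) (Iso.refl (𝟙 a ≫ 𝟙 a)) (𝟙 a ◁ γ)
        (𝟙 a) (𝟙 a) (Iso.refl (𝟙 a ≫ 𝟙 a)) (𝟙 a ◁ δ) → γ = δ) :=
  statement16_general W h5 hcoff f g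
end

section
/- Let B be a bicategory with pseudo pullbacks of cospans in W, where W satisfies [WB1]–[WB5], is pullback closed, and consists of co-fully-faithful arrows. Then every 2-cell of B(W⁻¹) has a representative whose left-hand 2-cell is the chosen pseudo pullback, and this representative is unique: two 2-cell diagrams with the same pseudo-pullback left-hand cell represent the same 2-cell of B(W⁻¹) if and only if their right-hand 2-cells are equal. -/
open CategoryTheory Bicategory

universe w v u

/-- Data of a pseudo pullback of a cospan `u : a ⟶ c ⟵ b : vm` in a bicategory:
an apex with projections, an invertible filler 2-cell, and a lifting universal
property compatible with the fillers. -/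
structure PseudoPullbackData {B : Type u} [Bicategory.{w, v} B] {a b c : B}
    (u : a ⟶ c) (vm : b ⟶ c) where
  pt : B
  fst : pt ⟶ a
  snd : pt ⟶ b
  iso : fst ≫ u ≅ snd ≫ vm
  lift : ∀ {x : B} (p : x ⟶ a) (q : x ⟶ b), (p ≫ u ≅ q ≫ vm) → (x ⟶ pt)
  liftFst : ∀ {x : B} (p : x ⟶ a) (q : x ⟶ b) (e : p ≫ u ≅ q ≫ vm),
    lift p q e ≫ fst ≅ p
  liftSnd : ∀ {x : B} (p : x ⟶ a) (q : x ⟶ b) (e : p ≫ u ≅ q ≫ vm),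
    lift p q e ≫ snd ≅ q
  lift_w : ∀ {x : B} (p : x ⟶ a) (q : x ⟶ b) (e : p ≫ u ≅ q ≫ vm),
    (α_ (lift p q e) fst u).hom ≫ lift p q e ◁ iso.hom ≫
        (α_ (lift p q e) snd vm).inv ≫ (liftSnd p q e).hom ▷ vm =
      (liftFst p q e).hom ▷ u ≫ e.hom

/-!
Right whiskering by an arrow of `W` is bijective on 2-cells, like left whiskering: [WB4] lifts a
2-cell along it after precomposing with an arrow of `W`, and that arrow can be cancelled on the
left. If `x ≫ w` and `w` lie in `W`, then by [WB3] some `g ≫ x` is isomorphic to an arrow of `W`,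
so left whiskering by `x` is injective, and surjective after one more precomposition.

Existence: lift the left cell of a diagram through the pseudo pullback and transport its right
cell along the lift. Uniqueness: the comparison cells `ε₁`, `ε₂` between two diagrams with the same
left cell are whiskerings `σ ▷ v₁`, `σ ▷ v₂` of one 2-cell `σ : s ⟶ t`, so naturality of `σ` turns
the pasting equation into `s ◁ β₁ = s ◁ β₂`, and `s` can be cancelled.
-/

namespace CoFF

variable {B : Type u} [Bicategory.{w, v} B] {a b : B} {u : a ⟶ b}

theorem precomp_full (h : CoFF u) (c : B) : (precomp c u).Full :=
  ⟨fun {f g} η => let ⟨η', hη', _⟩ := h f g η; ⟨η', hη'⟩⟩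

theorem precomp_faithful (h : CoFF u) (c : B) : (precomp c u).Faithful :=
  ⟨fun {f g} η₁ η₂ hη =>
    let ⟨_, _, huniq⟩ := h f g (u ◁ η₂); (huniq η₁ hη).trans (huniq η₂ rfl).symm⟩

end CoFF

namespace WClass

variable {B : Type u} [Bicategory.{w, v} B] {W : WClass B}

theorem postcomp_faithful (h1 : W.WB1) (h4 : W.WB4) (h5 : W.WB5)
    (hcoff : ∀ ⦃x y : B⦄ (f : x ⟶ y), W f → CoFF f)
    {y z : B} {wm : y ⟶ z} (hw : W wm) (x : B) : (postcomp x wm).Faithful := by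
  refine ⟨fun {F G} Ψ Ψ' hΨ => ?_⟩
  replace hΨ : Ψ ▷ wm = Ψ' ▷ wm := hΨ
  -- `Ψ` and `Ψ'` both lift `Ψ ▷ wm` along `𝟙 x`, and [WB4] compares the two liftings.
  have isLift : ∀ Φ : F ⟶ G, Φ ▷ wm = Ψ ▷ wm →
      IsLift F G wm (Ψ ▷ wm) (𝟙 x) ((λ_ F).hom ≫ Φ ≫ (λ_ G).inv) := by
    intro Φ hΦ
    rw [IsLift, ← hΦ]
    bicategory
  obtain ⟨_, s, t, hs, -, κ, hκ⟩ := h4.2 F G wm hw (Ψ ▷ wm) _ _ (h1 x) (isLift Ψ rfl)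
    _ _ (h1 x) (isLift Ψ' hΨ.symm)
  let σ : s ⟶ t := (ρ_ s).inv ≫ κ.hom ≫ (ρ_ t).hom
  have hσ : s ◁ Ψ ≫ σ ▷ G = s ◁ Ψ' ≫ σ ▷ G := by
    calc s ◁ Ψ ≫ σ ▷ G
        = (ρ_ s).inv ▷ F ≫ (((α_ s (𝟙 x) F).hom ≫ s ◁ ((λ_ F).hom ≫ Ψ ≫ (λ_ G).inv) ≫
            (α_ s (𝟙 x) G).inv) ≫ κ.hom ▷ G) ≫ (ρ_ t).hom ▷ G := by bicategory
      _ = (ρ_ s).inv ▷ F ≫ (κ.hom ▷ F ≫ (α_ t (𝟙 x) F).hom ≫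
            t ◁ ((λ_ F).hom ≫ Ψ' ≫ (λ_ G).inv) ≫ (α_ t (𝟙 x) G).inv) ≫ (ρ_ t).hom ▷ G := by
          rw [hκ]
      _ = σ ▷ F ≫ t ◁ Ψ' := by bicategory
      _ = s ◁ Ψ' ≫ σ ▷ G := (whisker_exchange σ Ψ').symm
  have := (hcoff s (h5 s (s ≫ 𝟙 x) hs ⟨(ρ_ s).symm⟩)).precomp_faithful y
  exact (precomp y s).map_injective ((cancel_mono (σ ▷ G)).mp hσ)

theorem postcomp_full (h4 : W.WB4) (hcoff : ∀ ⦃x y : B⦄ (f : x ⟶ y), W f → CoFF f)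
    {y z : B} {wm : y ⟶ z} (hw : W wm) (x : B) : (postcomp x wm).Full := by
  refine ⟨fun {F G} η => ?_⟩
  obtain ⟨_, u, hu, β, hβ⟩ := h4.1 F G wm hw η
  have := (hcoff u hu).precomp_full y
  have := (hcoff u hu).precomp_faithful z
  obtain ⟨β', rfl⟩ := (precomp y u).map_surjective β
  refine ⟨β', (precomp _ u).map_injective ?_⟩
  simp only [IsLift, precomp_map, postcomp_map, whisker_assoc, cancel_epi, cancel_mono] at hβ ⊢
  exact hβ

theorem exists_iso_mem_of_comp_mem (h1 : W.WB1) (h3 : W.WB3) (h4 : W.WB4) (h5 : W.WB5)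
    (hcoff : ∀ ⦃x y : B⦄ (f : x ⟶ y), W f → CoFF f)
    {e c a : B} {x : e ⟶ c} {w : c ⟶ a} (hw : W w) (hxw : W (x ≫ w)) :
    ∃ (e' : B) (g : e' ⟶ e) (m : e' ⟶ c), W m ∧ Nonempty (g ≫ x ≅ m) := by
  obtain ⟨e', g, m, hm, ⟨κ⟩⟩ := h3 (x ≫ w) w hxw
  have := postcomp_full h4 hcoff hw e'
  have := postcomp_faithful h1 h4 h5 hcoff hw e'
  exact ⟨e', g, m, hm, ⟨(postcomp e' w).preimageIso (α_ g x w ≪≫ κ)⟩⟩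

theorem precomp_faithful_of_comp_mem (h1 : W.WB1) (h3 : W.WB3) (h4 : W.WB4) (h5 : W.WB5)
    (hcoff : ∀ ⦃x y : B⦄ (f : x ⟶ y), W f → CoFF f)
    {e c a : B} {x : e ⟶ c} {w : c ⟶ a} (hw : W w) (hxw : W (x ≫ w)) (d : B) :
    (precomp d x).Faithful := by
  obtain ⟨_, g, m, hm, ⟨σ⟩⟩ := exists_iso_mem_of_comp_mem h1 h3 h4 h5 hcoff hw hxw
  have := (hcoff m hm).precomp_faithful d
  have : (precomp d (g ≫ x)).Faithful :=
    Functor.Faithful.of_iso (F := precomp d m) ((precomposing _ _ d).mapIso σ.symm)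
  have : (precomp d x ⋙ precomp d g).Faithful :=
    Functor.Faithful.of_iso (F := precomp d (g ≫ x)) (associatorNatIsoRight g x d)
  exact Functor.Faithful.of_comp _ (precomp d g)

theorem exists_whiskerLeft_eq_of_comp_mem (h1 : W.WB1) (h2 : W.WB2) (h3 : W.WB3) (h4 : W.WB4)
    (h5 : W.WB5) (hcoff : ∀ ⦃x y : B⦄ (f : x ⟶ y), W f → CoFF f)
    {e c a d : B} {x : e ⟶ c} {w : c ⟶ a} (hw : W w) (hxw : W (x ≫ w))
    {F G : c ⟶ d} (γ : x ≫ F ⟶ x ≫ G) :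
    ∃ (e' : B) (g : e' ⟶ e), W ((g ≫ x) ≫ w) ∧ ∃ δ : F ⟶ G, g ◁ x ◁ δ = g ◁ γ := by
  obtain ⟨_, g, m, hm, ⟨σ⟩⟩ := exists_iso_mem_of_comp_mem h1 h3 h4 h5 hcoff hw hxw
  obtain ⟨e', y, hy⟩ := h2 m w hm hw
  have := (hcoff m hm).precomp_full d
  have : (precomp d (g ≫ x)).Full :=
    Functor.Full.of_iso (F := precomp d m) ((precomposing _ _ d).mapIso σ.symm)
  have : (precomp d x ⋙ precomp d g).Full :=
    Functor.Full.of_iso (F := precomp d (g ≫ x)) (associatorNatIsoRight g x d)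
  obtain ⟨δ, hδ⟩ := (precomp d x ⋙ precomp d g).map_surjective (g ◁ γ)
  refine ⟨e', y ≫ g, h5 _ _ hy ⟨?_⟩, δ, ?_⟩
  · exact α_ _ x w ≪≫ α_ y g _ ≪≫ whiskerLeftIso y ((α_ g x w).symm ≪≫ whiskerRightIso σ w)
  · simp only [comp_whiskerLeft, cancel_epi, cancel_mono]
    exact congrArg (y ◁ ·) hδ

end WClass

section Pasting

variable {B : Type u} [Bicategory.{w, v} B]

theorem pasting_eq_of_whiskerLeft_eq {e d d' c₁ c₂ x : B} (s : e ⟶ d) (l : d ⟶ d')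
    {v₁ : d ⟶ c₁} {v₂ : d ⟶ c₂} {v₁' : d' ⟶ c₁} {v₂' : d' ⟶ c₂}
    (μ : l ≫ v₁' ≅ v₁) (ν : l ≫ v₂' ≅ v₂) {g₁ : c₁ ⟶ x} {g₂ : c₂ ⟶ x}
    (κ : v₁ ≫ g₁ ⟶ v₂ ≫ g₂) (κ' : v₁' ≫ g₁ ⟶ v₂' ≫ g₂)
    (h : s ◁ l ◁ κ' =
      s ◁ ((α_ l v₁' g₁).inv ≫ μ.hom ▷ g₁ ≫ κ ≫ ν.inv ▷ g₂ ≫ (α_ l v₂' g₂).hom)) :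
    (s ◁ μ.inv ≫ (α_ s l v₁').inv) ▷ g₁ ≫ (α_ (s ≫ l) v₁' g₁).hom ≫ (s ≫ l) ◁ κ' ≫
        (α_ (s ≫ l) v₂' g₂).inv =
      (α_ s v₁ g₁).hom ≫ s ◁ κ ≫ (α_ s v₂ g₂).inv ≫ (s ◁ ν.inv ≫ (α_ s l v₂').inv) ▷ g₂ :=
  calc _ = 𝟙 _ ⊗≫ s ◁ (μ.inv ▷ g₁) ⊗≫ s ◁ l ◁ κ' ⊗≫ 𝟙 _ := by bicategory
    _ = 𝟙 _ ⊗≫ s ◁ (μ.inv ▷ g₁) ⊗≫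
          s ◁ ((α_ l v₁' g₁).inv ≫ μ.hom ▷ g₁ ≫ κ ≫ ν.inv ▷ g₂ ≫ (α_ l v₂' g₂).hom) ⊗≫
          𝟙 _ := by rw [h]
    _ = 𝟙 _ ⊗≫ s ◁ (μ.inv ▷ g₁ ≫ μ.hom ▷ g₁) ⊗≫ s ◁ κ ⊗≫ s ◁ (ν.inv ▷ g₂) ⊗≫ 𝟙 _ := by
          bicategory
    _ = _ := by rw [inv_hom_whiskerRight]; bicategory

end Pasting

section DiagEquiv

variable {B : Type u} [Bicategory.{w, v} B] {W : WClass B}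
  {a b c₁ c₂ : B} {u₁ : c₁ ⟶ a} {f₁ : c₁ ⟶ b} {u₂ : c₂ ⟶ a} {f₂ : c₂ ⟶ b}

theorem diagEquiv_refl (h5 : W.WB5) {d : B} {v₁ : d ⟶ c₁} {v₂ : d ⟶ c₂}
    (hv : W (v₁ ≫ u₁)) (αc : v₁ ≫ u₁ ≅ v₂ ≫ u₂) (β : v₁ ≫ f₁ ⟶ v₂ ≫ f₂) :
    DiagEquiv W u₁ f₁ u₂ f₂ v₁ v₂ αc β v₁ v₂ αc β :=
  ⟨d, 𝟙 d, 𝟙 d, h5 _ _ hv ⟨whiskerRightIso (λ_ v₁) u₁⟩, Iso.refl _, Iso.refl _,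
    by simp, by simp⟩

theorem diagEquiv_of_lift {d d' e : B} {v₁ : d ⟶ c₁} {v₂ : d ⟶ c₂}
    (αc : v₁ ≫ u₁ ≅ v₂ ≫ u₂) (β : v₁ ≫ f₁ ⟶ v₂ ≫ f₂) {v₁' : d' ⟶ c₁} {v₂' : d' ⟶ c₂}
    (αc' : v₁' ≫ u₁ ≅ v₂' ≫ u₂) (β' : v₁' ≫ f₁ ⟶ v₂' ≫ f₂)
    (l : d ⟶ d') (μ : l ≫ v₁' ≅ v₁) (ν : l ≫ v₂' ≅ v₂)
    (hl : (α_ l v₁' u₁).hom ≫ l ◁ αc'.hom ≫ (α_ l v₂' u₂).inv ≫ ν.hom ▷ u₂ =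
      μ.hom ▷ u₁ ≫ αc.hom)
    (s : e ⟶ d) (hs : W ((s ≫ v₁) ≫ u₁))
    (hβ : s ◁ l ◁ β' =
      s ◁ ((α_ l v₁' f₁).inv ≫ μ.hom ▷ f₁ ≫ β ≫ ν.inv ▷ f₂ ≫ (α_ l v₂' f₂).hom)) :
    DiagEquiv W u₁ f₁ u₂ f₂ v₁ v₂ αc β v₁' v₂' αc' β' := by
  have hαc : l ◁ αc'.hom =
      (α_ l v₁' u₁).inv ≫ μ.hom ▷ u₁ ≫ αc.hom ≫ ν.inv ▷ u₂ ≫ (α_ l v₂' u₂).hom := by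
    rw [← reassoc_of% hl]
    simp
  exact ⟨e, s, s ≫ l, hs, whiskerLeftIso s μ.symm ≪≫ (α_ s l v₁').symm,
    whiskerLeftIso s ν.symm ≪≫ (α_ s l v₂').symm,
    pasting_eq_of_whiskerLeft_eq s l μ ν _ _ (congrArg (s ◁ ·) hαc),
    pasting_eq_of_whiskerLeft_eq s l μ ν _ _ hβ⟩

end DiagEquiv

namespace WClass

variable {B : Type u} [Bicategory.{w, v} B] {W : WClass B}
  {a b c₁ c₂ : B} {u₁ : c₁ ⟶ a} {u₂ : c₂ ⟶ a}

theorem exists_diagEquiv_of_pseudoPullback (h1 : W.WB1) (h2 : W.WB2) (h3 : W.WB3)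
    (h4 : W.WB4) (h5 : W.WB5) (hcoff : ∀ ⦃x y : B⦄ (f : x ⟶ y), W f → CoFF f)
    (f₁ : c₁ ⟶ b) (f₂ : c₂ ⟶ b) (P : PseudoPullbackData u₁ u₂) (hP : W (P.fst ≫ u₁))
    {d : B} (v₁ : d ⟶ c₁) (v₂ : d ⟶ c₂) (hv : W (v₁ ≫ u₁))
    (αc : v₁ ≫ u₁ ≅ v₂ ≫ u₂) (β : v₁ ≫ f₁ ⟶ v₂ ≫ f₂) :
    ∃ δ : P.fst ≫ f₁ ⟶ P.snd ≫ f₂,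
      DiagEquiv W u₁ f₁ u₂ f₂ v₁ v₂ αc β P.fst P.snd P.iso δ := by
  set l := P.lift v₁ v₂ αc
  set μ := P.liftFst v₁ v₂ αc
  set ν := P.liftSnd v₁ v₂ αc
  have hl : W (l ≫ P.fst ≫ u₁) := h5 _ _ hv ⟨(α_ l P.fst u₁).symm ≪≫ whiskerRightIso μ u₁⟩
  obtain ⟨e, g, hg, δ, hδ⟩ := exists_whiskerLeft_eq_of_comp_mem h1 h2 h3 h4 h5 hcoff hP hl
    ((α_ l P.fst f₁).inv ≫ μ.hom ▷ f₁ ≫ β ≫ ν.inv ▷ f₂ ≫ (α_ l P.snd f₂).hom)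
  have hgv : W ((g ≫ v₁) ≫ u₁) := h5 _ _ hg
    ⟨whiskerRightIso (whiskerLeftIso g μ.symm ≪≫ (α_ g l P.fst).symm) u₁ ≪≫ α_ _ _ _⟩
  exact ⟨δ, diagEquiv_of_lift αc β P.iso δ l μ ν (P.lift_w v₁ v₂ αc) g hgv hδ⟩

theorem exists_whiskerRight_eq_of_pasting (h1 : W.WB1) (h4 : W.WB4) (h5 : W.WB5)
    (hcoff : ∀ ⦃x y : B⦄ (f : x ⟶ y), W f → CoFF f) (hu₁ : W u₁) (hu₂ : W u₂)
    {d e : B} {v₁ : d ⟶ c₁} {v₂ : d ⟶ c₂} (hv : W (v₁ ≫ u₁)) (αc : v₁ ≫ u₁ ≅ v₂ ≫ u₂)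
    {s t : e ⟶ d} (ε₁ : s ≫ v₁ ≅ t ≫ v₁) (ε₂ : s ≫ v₂ ≅ t ≫ v₂)
    (h : ε₁.hom ▷ u₁ ≫ (α_ t v₁ u₁).hom ≫ t ◁ αc.hom ≫ (α_ t v₂ u₂).inv =
      (α_ s v₁ u₁).hom ≫ s ◁ αc.hom ≫ (α_ s v₂ u₂).inv ≫ ε₂.hom ▷ u₂) :
    ∃ σ : s ⟶ t, σ ▷ v₁ = ε₁.hom ∧ σ ▷ v₂ = ε₂.hom := by
  have := postcomp_full h4 hcoff hv e
  have := postcomp_faithful h1 h4 h5 hcoff hu₁ e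
  have := postcomp_faithful h1 h4 h5 hcoff hu₂ e
  obtain ⟨σ, hσ⟩ := (postcomp e (v₁ ≫ u₁)).map_surjective
    ((α_ s v₁ u₁).inv ≫ ε₁.hom ▷ u₁ ≫ (α_ t v₁ u₁).hom)
  replace hσ : σ ▷ (v₁ ≫ u₁) = (α_ s v₁ u₁).inv ≫ ε₁.hom ▷ u₁ ≫ (α_ t v₁ u₁).hom := hσ
  have hσ₂ : σ ▷ (v₂ ≫ u₂) = s ◁ αc.inv ≫ σ ▷ (v₁ ≫ u₁) ≫ t ◁ αc.hom := by
    rw [← whisker_exchange, whiskerLeft_inv_hom_assoc]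
  refine ⟨σ, (postcomp e u₁).map_injective ?_, (postcomp e u₂).map_injective ?_⟩
  · change σ ▷ v₁ ▷ u₁ = ε₁.hom ▷ u₁
    rw [whiskerRight_comp_symm, hσ]
    simp
  · change σ ▷ v₂ ▷ u₂ = ε₂.hom ▷ u₂
    rw [whiskerRight_comp_symm, hσ₂, hσ]
    simp only [Category.assoc]
    rw [h]
    simp

theorem eq_of_diagEquiv (h1 : W.WB1) (h3 : W.WB3) (h4 : W.WB4) (h5 : W.WB5)
    (hcoff : ∀ ⦃x y : B⦄ (f : x ⟶ y), W f → CoFF f) (hu₁ : W u₁) (hu₂ : W u₂)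
    {f₁ : c₁ ⟶ b} {f₂ : c₂ ⟶ b} {d : B} {v₁ : d ⟶ c₁} {v₂ : d ⟶ c₂} (hv : W (v₁ ≫ u₁))
    {αc : v₁ ≫ u₁ ≅ v₂ ≫ u₂} {β₁ β₂ : v₁ ≫ f₁ ⟶ v₂ ≫ f₂}
    (h : DiagEquiv W u₁ f₁ u₂ f₂ v₁ v₂ αc β₁ v₁ v₂ αc β₂) : β₁ = β₂ := by
  obtain ⟨e, s, t, hs, ε₁, ε₂, hαc, hβ⟩ := h
  obtain ⟨σ, hσ₁, hσ₂⟩ :=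
    exists_whiskerRight_eq_of_pasting h1 h4 h5 hcoff hu₁ hu₂ hv αc ε₁ ε₂ hαc
  have hnat : ε₁.hom ▷ f₁ ≫ (α_ t v₁ f₁).hom ≫ t ◁ β₂ ≫ (α_ t v₂ f₂).inv =
      (α_ s v₁ f₁).hom ≫ s ◁ β₂ ≫ (α_ s v₂ f₂).inv ≫ ε₂.hom ▷ f₂ := by
    simp only [← hσ₁, ← hσ₂, whiskerRight_comp_symm, Category.assoc, Iso.inv_hom_id_assoc]
    rw [whisker_exchange_assoc]
  have := precomp_faithful_of_comp_mem h1 h3 h4 h5 hcoff hv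
    (h5 _ _ hs ⟨(α_ s v₁ u₁).symm⟩) b
  refine (precomp b s).map_injective (?_ : s ◁ β₁ = s ◁ β₂)
  exact (cancel_mono ((α_ s v₂ f₂).inv ≫ ε₂.hom ▷ f₂)).mp
    (by simpa using hβ.symm.trans hnat)

end WClass

theorem statement18 {B : Type u} [Bicategory.{w, v} B] (W : WClass B)
    (h1 : W.WB1) (h2 : W.WB2) (h3 : W.WB3) (h4 : W.WB4) (h5 : W.WB5)
    (hcoff : ∀ ⦃x y : B⦄ (f : x ⟶ y), W f → CoFF f)
    (pb : ∀ {x y z : B} (u : x ⟶ z) (vm : y ⟶ z), W u → W vm → PseudoPullbackData u vm)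
    (hpbc : ∀ {x y z : B} (u : x ⟶ z) (vm : y ⟶ z) (hu : W u) (hv : W vm),
      W ((pb u vm hu hv).fst ≫ u))
    {a b c₁ c₂ : B} (u₁ : c₁ ⟶ a) (f₁ : c₁ ⟶ b) (u₂ : c₂ ⟶ a) (f₂ : c₂ ⟶ b)
    (hu₁ : W u₁) (hu₂ : W u₂) :
    (∀ {d : B} (v₁ : d ⟶ c₁) (v₂ : d ⟶ c₂), W (v₁ ≫ u₁) →
      ∀ (αc : v₁ ≫ u₁ ≅ v₂ ≫ u₂) (β : v₁ ≫ f₁ ⟶ v₂ ≫ f₂),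
        ∃ δ : (pb u₁ u₂ hu₁ hu₂).fst ≫ f₁ ⟶ (pb u₁ u₂ hu₁ hu₂).snd ≫ f₂,
          DiagEquiv W u₁ f₁ u₂ f₂ v₁ v₂ αc β
            (pb u₁ u₂ hu₁ hu₂).fst (pb u₁ u₂ hu₁ hu₂).snd (pb u₁ u₂ hu₁ hu₂).iso δ) ∧
    (∀ δ₁ δ₂ : (pb u₁ u₂ hu₁ hu₂).fst ≫ f₁ ⟶ (pb u₁ u₂ hu₁ hu₂).snd ≫ f₂,
      DiagEquiv W u₁ f₁ u₂ f₂
          (pb u₁ u₂ hu₁ hu₂).fst (pb u₁ u₂ hu₁ hu₂).snd (pb u₁ u₂ hu₁ hu₂).iso δ₁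
          (pb u₁ u₂ hu₁ hu₂).fst (pb u₁ u₂ hu₁ hu₂).snd (pb u₁ u₂ hu₁ hu₂).iso δ₂ ↔
        δ₁ = δ₂) := by
  have hP := hpbc u₁ u₂ hu₁ hu₂
  refine ⟨fun v₁ v₂ hv αc β =>
      WClass.exists_diagEquiv_of_pseudoPullback h1 h2 h3 h4 h5 hcoff f₁ f₂ _ hP v₁ v₂ hv αc β,
    fun δ₁ δ₂ => ⟨WClass.eq_of_diagEquiv h1 h3 h4 h5 hcoff hu₁ hu₂ hP, ?_⟩⟩
  rintro rfl
  exact diagEquiv_refl h5 hP _ δ₁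
end
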